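/- arXiv:0707.2889 — 2 statements merged into one kernel-verified Lean document; each statement's English description precedes it below -/
import Mathlib

section
/- Let η be a local configuration with radius r and x ∈ V_n a vertex. If a(n) + 𝒱b(n) ≤ 0, then for every configuration σ ∈ {−1,+1}^{δB(x,r)}, the conditional probability satisfies μ_{a,b}(I_x^η = 1 | σ) ≥ 2^{−β_r} W_n(η); in particular, μ_{a,b}(I_x^η = 1) ≥ 2^{−β_r} W_n(η). -/
open scoped BigOperators ENNReal NNReal
open Filter

attribute [local instance] Classical.propDecidable

namespace Geo

/-- Vertex set of the `d`-dimensional lattice torus of size `n`: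
`V_n = {0, …, n-1}^d` with componentwise arithmetic modulo `n`. -/
abbrev Vtx (d n : ℕ) := Fin d → ZMod n

/-- Torus distance between two elements of `ZMod n`:
`min ((u - v).val) ((v - u).val)`, i.e. the distance modulo `n`. -/
def cd {n : ℕ} (u v : ZMod n) : ℕ := min (u - v).val (v - u).val

lemma cd_comm {n : ℕ} (u v : ZMod n) : cd u v = cd v u := min_comm _ _

/-- The lattice torus graph `G_n`: `x ∼ y` iff `x ≠ y` and `‖y - x‖_q ≤ ρ`
(`q = ⊤` is the `L^∞` norm; for finite `q ≥ 1`, `‖z‖_q ≤ ρ ↔ ∑ |z i|^q ≤ ρ^q`). -/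
def torus (d n : ℕ) (q : ℝ≥0∞) (ρ : ℕ) : SimpleGraph (Vtx d n) where
  Adj x y := x ≠ y ∧
    (if q = ⊤ then ∀ i, cd (x i) (y i) ≤ ρ
      else ∑ i, ((cd (x i) (y i) : ℝ)) ^ q.toReal ≤ (ρ : ℝ) ^ q.toReal)
  symm := ⟨by
    intro x y h
    refine ⟨h.1.symm, ?_⟩
    have key : ∀ i, cd (y i) (x i) = cd (x i) (y i) := fun i => cd_comm _ _
    simp only [key]
    exact h.2⟩
  loopless := ⟨fun x h => h.1 rfl⟩

/-- Configurations: `𝒳_n = {-1,+1}^{V_n}`, encoded by `Bool` (`true` is the state `+1`). -/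
abbrev Config (d n : ℕ) := Vtx d n → Bool

/-- The spin `±1` of a state. -/
def spin (s : Bool) : ℝ := if s then 1 else -1

variable {d n : ℕ}

section Gibbs

variable [NeZero n] (G : SimpleGraph (Vtx d n)) (a b : ℝ)

/-- Unnormalised Gibbs weight `exp(a ∑_x σ(x) + b ∑_{{x,y} ∈ E_n} σ(x)σ(y))`
(the sum over edges is written as half of the sum over ordered adjacent pairs). -/
noncomputable def gw (σ : Config d n) : ℝ :=
  Real.exp (a * ∑ x, spin (σ x) +
    b * ((∑ x, ∑ y, if G.Adj x y then spin (σ x) * spin (σ y) else 0) / 2))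

/-- The Gibbs measure `μ_{a,b}` of an event `A`. -/
noncomputable def P (A : Set (Config d n)) : ℝ :=
  (∑ σ, if σ ∈ A then gw G a b σ else 0) / ∑ σ, gw G a b σ

/-- Conditional probability `μ_{a,b}(A | B)`. -/
noncomputable def Pc (A B : Set (Config d n)) : ℝ :=
  P G a b (A ∩ B) / P G a b B

end Gibbs

/-- The event `A` belongs to `ℱ(S)`, the σ-algebra generated by the configurations on `S`. -/
def MeasOn (A : Set (Config d n)) (S : Set (Vtx d n)) : Prop :=
  ∀ σ τ : Config d n, (∀ x ∈ S, σ x = τ x) → (σ ∈ A ↔ τ ∈ A)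

/-- The cylinder event of all configurations agreeing with `τ` on `S`. -/
def cyl (S : Set (Vtx d n)) (τ : Config d n) : Set (Config d n) :=
  {σ | ∀ x ∈ S, σ x = τ x}

/-- Exterior neighbourhood `δS` of a set of vertices. -/
def nbhd (G : SimpleGraph (Vtx d n)) (S : Set (Vtx d n)) : Set (Vtx d n) :=
  {y | y ∉ S ∧ ∃ x ∈ S, G.Adj x y}

section FinPart

variable [NeZero n]

/-- Exterior neighbourhood `δS` (Finset version). -/
noncomputable def nbhdF (G : SimpleGraph (Vtx d n)) (S : Finset (Vtx d n)) :
    Finset (Vtx d n) :=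
  Finset.univ.filter fun y => y ∉ S ∧ ∃ x ∈ S, G.Adj x y

/-- `𝒱`: the (common) number of neighbours of a vertex. -/
noncomputable def nV (G : SimpleGraph (Vtx d n)) : ℕ :=
  (Finset.univ.filter fun y => G.Adj 0 y).card

/-- The ball `B(x,r)` for the graph distance. -/
noncomputable def ball (G : SimpleGraph (Vtx d n)) (x : Vtx d n) (r : ℕ) :
    Finset (Vtx d n) :=
  Finset.univ.filter fun y => G.dist x y ≤ r

/-- The ring `ℛ(x,r,R) = {y : r < dist(x,y) ≤ R}`. -/
noncomputable def ringF (G : SimpleGraph (Vtx d n)) (x : Vtx d n) (r R : ℕ) :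
    Finset (Vtx d n) :=
  Finset.univ.filter fun y => r < G.dist x y ∧ G.dist x y ≤ R

/-- `k(ζ)`: the number of positive vertices of the configuration `ζ` on the set `S`. -/
noncomputable def kC (S : Finset (Vtx d n)) (ζ : Config d n) : ℕ :=
  (S.filter fun x => ζ x = true).card

/-- Twice the number of edges joining two positive vertices of `ζ` inside `S`
(i.e. the number of ordered adjacent positive pairs). -/
noncomputable def op (G : SimpleGraph (Vtx d n)) (S : Finset (Vtx d n)) (ζ : Config d n) : ℕ :=
  ((S ×ˢ S).filter fun p => G.Adj p.1 p.2 ∧ ζ p.1 = true ∧ ζ p.2 = true).card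

/-- The perimeter `γ(ζ) = 𝒱·k(ζ) - 2·|{edges inside V₊(ζ)}|`. -/
noncomputable def gam (V : ℕ) (G : SimpleGraph (Vtx d n)) (S : Finset (Vtx d n))
    (ζ : Config d n) : ℤ :=
  (V : ℤ) * kC S ζ - op G S ζ

/-- The weight `W_n(ζ) = exp(2a·k(ζ) - 2b·γ(ζ))`. -/
noncomputable def W (a b : ℝ) (V : ℕ) (G : SimpleGraph (Vtx d n)) (S : Finset (Vtx d n))
    (ζ : Config d n) : ℝ :=
  Real.exp (2 * a * (kC S ζ : ℝ) - 2 * b * (gam V G S ζ : ℝ))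

/-- The connection `conn(ζ,ζ')`: the number of edges joining a positive vertex of `ζ`
in `S` to a positive vertex of `ζ'` in `S'`. -/
noncomputable def connC (G : SimpleGraph (Vtx d n)) (S S' : Finset (Vtx d n))
    (ζ ζ' : Config d n) : ℕ :=
  ((S ×ˢ S').filter fun p => G.Adj p.1 p.2 ∧ ζ p.1 = true ∧ ζ' p.2 = true).card

/-- The configuration `ζζ'`, equal to `ζ` on `S` and to `ζ'` elsewhere. -/
noncomputable def glue (S : Finset (Vtx d n)) (ζ ζ' : Config d n) : Config d n :=
  fun z => if z ∈ S then ζ z else ζ' z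

/-- Local configurations with radius `r`: `𝒞_r = {-1,+1}^{B(0,r)}`. -/
abbrev LC (G : SimpleGraph (Vtx d n)) (r : ℕ) :=
  ↥(ball G (0 : Vtx d n) r) → Bool

/-- Extension of a local configuration to a full configuration (negative outside `B(0,r)`). -/
noncomputable def extLC (G : SimpleGraph (Vtx d n)) (r : ℕ) (η : LC G r) : Config d n :=
  fun z => if h : z ∈ ball G (0 : Vtx d n) r then η ⟨z, h⟩ else false

/-- Number `k(η)` of positive vertices of a local configuration. -/
noncomputable def kL (G : SimpleGraph (Vtx d n)) (r : ℕ) (η : LC G r) : ℕ :=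
  kC (ball G (0 : Vtx d n) r) (extLC G r η)

/-- Perimeter `γ(η)` of a local configuration. -/
noncomputable def gamL (V : ℕ) (G : SimpleGraph (Vtx d n)) (r : ℕ) (η : LC G r) : ℤ :=
  gam V G (ball G (0 : Vtx d n) r) (extLC G r η)

/-- Weight `W_n(η)` of a local configuration. -/
noncomputable def WL (a b : ℝ) (V : ℕ) (G : SimpleGraph (Vtx d n)) (r : ℕ) (η : LC G r) : ℝ :=
  W a b V G (ball G (0 : Vtx d n) r) (extLC G r η)

/-- The translate `η_x` of a local configuration, as a full configuration
(`η_x(x + y) = η(y)` for `y ∈ B(0,r)`, negative elsewhere). -/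
noncomputable def transl (G : SimpleGraph (Vtx d n)) (r : ℕ) (x : Vtx d n) (η : LC G r) :
    Config d n :=
  fun z => if h : z - x ∈ ball G (0 : Vtx d n) r then η ⟨z - x, h⟩ else false

/-- The event `{I_x^η = 1}`: the local configuration `η` occurs on `B(x,r)`. -/
def occ (G : SimpleGraph (Vtx d n)) (r : ℕ) (x : Vtx d n) (η : LC G r) :
    Set (Config d n) :=
  {σ | ∀ y (h : y ∈ ball G (0 : Vtx d n) r), σ (x + y) = η ⟨y, h⟩}

/-- The number `X_n(η)` of copies of `η` in the graph. -/
noncomputable def Xn (G : SimpleGraph (Vtx d n)) (r : ℕ) (η : LC G r) (σ : Config d n) : ℕ :=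
  (Finset.univ.filter fun x : Vtx d n => σ ∈ occ G r x η).card

/-- The event `𝒜(x,R,W)`: some local configuration of weight at most `W` occurs on a ball
`B(y,r)` with `y ∈ B(x,R-r)`. -/
def AEv (a b : ℝ) (G : SimpleGraph (Vtx d n)) (r : ℕ) (x : Vtx d n) (R : ℕ) (Wt : ℝ) :
    Set (Config d n) :=
  {σ | ∃ y ∈ ball G x (R - r), ∃ η : LC G r,
    WL a b (nV G) G r η ≤ Wt ∧ σ ∈ occ G r y η}

/-- The event `𝒜_r(x,R,W)`: some local configuration of weight at most `W` occurs on a ball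
`B(y,r)` with `y` in the ring `ℛ(x,2r,R-r)`. -/
def AEvR (a b : ℝ) (G : SimpleGraph (Vtx d n)) (r : ℕ) (x : Vtx d n) (R : ℕ) (Wt : ℝ) :
    Set (Config d n) :=
  {σ | ∃ y ∈ ringF G x (2 * r) (R - r), ∃ ζ : LC G r,
    WL a b (nV G) G r ζ ≤ Wt ∧ σ ∈ occ G r y ζ}

/-- The event `ℋ_r(x,R,ℓ,W)`: two local configurations of weight exactly `W` occur at
centres `y, y'` of the ring `ℛ(x,2r,R-r)` with `2r < dist(y,y') ≤ ℓ`. -/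
def HEv (a b : ℝ) (G : SimpleGraph (Vtx d n)) (r : ℕ) (x : Vtx d n) (R ℓ : ℕ) (Wt : ℝ) :
    Set (Config d n) :=
  {σ | ∃ y ∈ ringF G x (2 * r) (R - r), ∃ y' ∈ ringF G x (2 * r) (R - r),
    ∃ ζ : LC G r, ∃ ζ' : LC G r,
      WL a b (nV G) G r ζ = Wt ∧ WL a b (nV G) G r ζ' = Wt ∧
      2 * r < G.dist y y' ∧ G.dist y y' ≤ ℓ ∧ σ ∈ occ G r y ζ ∧ σ ∈ occ G r y' ζ'}

end FinPart

end Geo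

/-!
Write `σ⁻` for `σ` with every spin of `B = B(x,r)` set to `-1`. Only edges leaving the positive
part of `B` change their product, so the Gibbs exponent of `σ` exceeds that of `σ⁻` by `2a·k(σ)`
up to an error of at most `2b·γ(σ) ≤ 2b𝒱·k(σ)`. With `b ≥ 0` and `a + 𝒱b ≤ 0` this gives
`μ(σ) ≤ μ(σ⁻)` and `W(σ')·μ(σ⁻) ≤ μ(σ')`, hence `W(σ')·μ(σ) ≤ μ(σ')` whenever `σ` and `σ'` agree
off `B`. Overwriting `σ` by `η_x` on `B` is a map whose fibres have `2^{β_r}` elements, so summing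
over any event `A` determined off `B` gives `W_n(η)·μ(A) ≤ 2^{β_r}·μ({I_x^η = 1} ∩ A)`.
Translations are automorphisms of the torus, which identifies the weight of `η_x` with `W_n(η)`.
-/

namespace SimpleGraph

variable {V V' : Type*} {G : SimpleGraph V} {G' : SimpleGraph V'}

theorem Hom.edist_le (f : G →g G') (u v : V) : G'.edist (f u) (f v) ≤ G.edist u v := by
  rw [edist_eq_sInf (G := G)]
  refine le_sInf ?_
  rintro _ ⟨p, rfl⟩
  simpa using (p.map f).edist_le

theorem Iso.dist_eq (f : G ≃g G') (u v : V) : G'.dist (f u) (f v) = G.dist u v := by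
  refine congrArg ENat.toNat (le_antisymm (Hom.edist_le f.toHom u v) ?_)
  simpa using Hom.edist_le f.symm.toHom (f u) (f v)

end SimpleGraph

namespace Geo

open Finset

section Translation

variable {d n : ℕ}

theorem torus_adj_add_left (q : ℝ≥0∞) (ρ : ℕ) (z u v : Vtx d n) :
    (torus d n q ρ).Adj (z + u) (z + v) ↔ (torus d n q ρ).Adj u v := by
  simp [torus, cd]

variable {G : SimpleGraph (Vtx d n)}

def addLeftIso (hG : ∀ z u v : Vtx d n, G.Adj (z + u) (z + v) ↔ G.Adj u v) (z : Vtx d n) :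
    G ≃g G :=
  ⟨Equiv.addLeft z, hG z _ _⟩

@[simp]
theorem addLeftIso_apply (hG : ∀ z u v : Vtx d n, G.Adj (z + u) (z + v) ↔ G.Adj u v)
    (z u : Vtx d n) : addLeftIso hG z u = z + u :=
  rfl

theorem kC_map (e : Vtx d n ≃ Vtx d n) (S : Finset (Vtx d n)) (σ : Config d n) :
    kC (S.map e.toEmbedding) σ = kC S (σ ∘ e) := by
  simp only [kC, filter_map, card_map]
  rfl

theorem op_map (φ : G ≃g G) (S : Finset (Vtx d n)) (σ : Config d n) :
    op G (S.map φ.toEquiv.toEmbedding) σ = op G S (σ ∘ φ) := by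
  rw [op, op, ← prodMap_map_product, filter_map, card_map]
  simp [Function.comp_def, φ.map_adj_iff]

theorem W_map (a b : ℝ) (V : ℕ) (φ : G ≃g G) (S : Finset (Vtx d n)) (σ : Config d n) :
    W a b V G (S.map φ.toEquiv.toEmbedding) σ = W a b V G S (σ ∘ φ) := by
  simp only [W, gam, kC_map, op_map]
  rfl

variable [NeZero n]

theorem ball_map (φ : G ≃g G) (x : Vtx d n) (r : ℕ) :
    (ball G x r).map φ.toEquiv.toEmbedding = ball G (φ x) r := by
  ext y
  obtain ⟨z, rfl⟩ := φ.surjective y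
  rw [show φ z = φ.toEquiv.toEmbedding z from rfl, Finset.mem_map']
  simp [ball, φ.dist_eq]

section Invariant

variable (hG : ∀ z u v : Vtx d n, G.Adj (z + u) (z + v) ↔ G.Adj u v)
include hG

theorem ball_eq_map_addLeft (x : Vtx d n) (r : ℕ) :
    ball G x r = (ball G 0 r).map (addLeftIso hG x).toEquiv.toEmbedding := by
  rw [ball_map, addLeftIso_apply, add_zero]

theorem card_ball (x : Vtx d n) (r : ℕ) : #(ball G x r) = #(ball G 0 r) := by
  rw [ball_eq_map_addLeft hG, card_map]

theorem W_ball_transl (a b : ℝ) (V r : ℕ) (x : Vtx d n) (η : LC G r) :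
    W a b V G (ball G x r) (transl G r x η) = WL a b V G r η := by
  rw [ball_eq_map_addLeft hG, W_map, WL]
  congr 1
  funext y
  simp [transl, extLC]

theorem occ_eq_cyl (r : ℕ) (x : Vtx d n) (η : LC G r) :
    occ G r x η = cyl ↑(ball G x r) (transl G r x η) := by
  ext σ
  simp only [occ, cyl, ball_eq_map_addLeft hG x r, coe_map, Set.mem_ofPred_eq,
    Set.forall_mem_image]
  exact forall₂_congr fun y hy => by simp [transl, hy]

theorem degree_eq_nV (u : Vtx d n) : G.degree u = nV G := by
  have h := (addLeftIso hG u).degree_eq 0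
  rw [addLeftIso_apply, add_zero] at h
  rw [h, nV, ← G.card_neighborFinset_eq_degree, G.neighborFinset_eq_filter]

end Invariant

end Translation

section Energy

variable {d n : ℕ}

theorem abs_spin_mul_sub_spin_glue_mul_le (B : Finset (Vtx d n)) (σ : Config d n)
    (u v : Vtx d n) :
    |spin (σ u) * spin (σ v) -
        spin (glue B (fun _ => false) σ u) * spin (glue B (fun _ => false) σ v)| ≤
      2 * (if (u ∈ B ∧ σ u = true) ∧ ¬(v ∈ B ∧ σ v = true) then 1 else 0) +
        2 * (if (v ∈ B ∧ σ v = true) ∧ ¬(u ∈ B ∧ σ u = true) then 1 else 0) := by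
  by_cases hu : u ∈ B <;> by_cases hv : v ∈ B <;> cases hσu : σ u <;> cases hσv : σ v <;>
    simp [glue, spin, hu, hv, hσu, hσv] <;> norm_num

variable [NeZero n]

noncomputable def magnetization (σ : Config d n) : ℝ := ∑ x, spin (σ x)

noncomputable def interaction (G : SimpleGraph (Vtx d n)) (σ : Config d n) : ℝ :=
  ∑ x, ∑ y, if G.Adj x y then spin (σ x) * spin (σ y) else 0

theorem gw_eq_exp (G : SimpleGraph (Vtx d n)) (a b : ℝ) (σ : Config d n) :
    gw G a b σ = Real.exp (a * magnetization σ + b * (interaction G σ / 2)) :=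
  rfl

variable {G : SimpleGraph (Vtx d n)} (B : Finset (Vtx d n)) (σ : Config d n)

theorem kC_eq_sum : (kC B σ : ℝ) = ∑ u, if u ∈ B ∧ σ u = true then 1 else 0 := by
  rw [sum_boole, kC]
  congr 2
  ext u
  simp

theorem op_eq_sum : (op G B σ : ℝ) =
    ∑ u, ∑ v, if G.Adj u v ∧ (u ∈ B ∧ σ u = true) ∧ (v ∈ B ∧ σ v = true) then 1 else 0 := by
  rw [← sum_product', sum_boole, op]
  congr 2
  ext p
  simp only [mem_filter, mem_product, mem_univ, true_and]
  tauto

theorem magnetization_glue_false :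
    magnetization (glue B (fun _ => false) σ) = magnetization σ - 2 * kC B σ := by
  rw [kC_eq_sum, mul_sum, magnetization, magnetization, ← sum_sub_distrib]
  refine sum_congr rfl fun u _ => ?_
  by_cases hu : u ∈ B <;> cases h : σ u <;> simp [glue, spin, hu, h]; norm_num

variable {V : ℕ} (hdeg : ∀ u, G.degree u ≤ V)
include hdeg

theorem sum_adj_pos_le :
    ∑ u, ∑ v, (if G.Adj u v ∧ (u ∈ B ∧ σ u = true) then (1 : ℝ) else 0) ≤ V * kC B σ := by
  rw [kC_eq_sum, mul_sum]
  refine sum_le_sum fun u _ => ?_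
  by_cases hu : u ∈ B ∧ σ u = true
  · simp only [hu, and_true, if_true, mul_one, sum_boole]
    rw [← G.neighborFinset_eq_filter, G.card_neighborFinset_eq_degree]
    exact_mod_cast hdeg u
  · simp [hu]

theorem sum_adj_pos_not_pos_le :
    ∑ u, ∑ v, (if G.Adj u v ∧ (u ∈ B ∧ σ u = true) ∧ ¬(v ∈ B ∧ σ v = true) then (1 : ℝ) else 0)
      ≤ gam V G B σ := by
  have hsplit : ∀ u v,
      (if G.Adj u v ∧ (u ∈ B ∧ σ u = true) ∧ ¬(v ∈ B ∧ σ v = true) then (1 : ℝ) else 0) =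
        (if G.Adj u v ∧ (u ∈ B ∧ σ u = true) then 1 else 0) -
          (if G.Adj u v ∧ (u ∈ B ∧ σ u = true) ∧ (v ∈ B ∧ σ v = true) then 1 else 0) := by
    intro u v
    by_cases h₁ : G.Adj u v ∧ (u ∈ B ∧ σ u = true) <;> by_cases h₂ : v ∈ B ∧ σ v = true <;>
      simp [h₁, h₂]
  simp only [hsplit, sum_sub_distrib, ← op_eq_sum, gam]
  push_cast
  linarith [sum_adj_pos_le B σ hdeg]

theorem abs_interaction_sub_le :
    |interaction G σ - interaction G (glue B (fun _ => false) σ)| ≤ 4 * gam V G B σ := by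
  set P : Vtx d n → Prop := fun u => u ∈ B ∧ σ u = true
  set σ' := glue B (fun _ => false) σ
  have hpt : ∀ u v,
      |(if G.Adj u v then spin (σ u) * spin (σ v) else 0) -
          (if G.Adj u v then spin (σ' u) * spin (σ' v) else 0)| ≤
        2 * (if G.Adj u v ∧ P u ∧ ¬P v then 1 else 0) +
          2 * (if G.Adj v u ∧ P v ∧ ¬P u then 1 else 0) := by
    intro u v
    by_cases hadj : G.Adj u v
    · simp only [hadj, hadj.symm, if_true, true_and]
      exact abs_spin_mul_sub_spin_glue_mul_le B σ u v
    · simp [hadj, G.adj_comm v u]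
  calc |interaction G σ - interaction G σ'|
      = |∑ u, ∑ v, ((if G.Adj u v then spin (σ u) * spin (σ v) else 0) -
          (if G.Adj u v then spin (σ' u) * spin (σ' v) else 0))| := by
        simp only [interaction, sum_sub_distrib]
    _ ≤ ∑ u, ∑ v, |(if G.Adj u v then spin (σ u) * spin (σ v) else 0) -
          (if G.Adj u v then spin (σ' u) * spin (σ' v) else 0)| :=
        (abs_sum_le_sum_abs _ _).trans (sum_le_sum fun u _ => abs_sum_le_sum_abs _ _)
    _ ≤ ∑ u, ∑ v, (2 * (if G.Adj u v ∧ P u ∧ ¬P v then (1 : ℝ) else 0) +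
          2 * (if G.Adj v u ∧ P v ∧ ¬P u then 1 else 0)) :=
        sum_le_sum fun u _ => sum_le_sum fun v _ => hpt u v
    _ = 4 * ∑ u, ∑ v, (if G.Adj u v ∧ P u ∧ ¬P v then (1 : ℝ) else 0) := by
        simp only [sum_add_distrib, ← mul_sum]
        rw [sum_comm (f := fun u v => if G.Adj v u ∧ P v ∧ ¬P u then (1 : ℝ) else 0)]
        ring
    _ ≤ 4 * gam V G B σ := by
        gcongr
        exact sum_adj_pos_not_pos_le B σ hdeg

variable {a b : ℝ} (hb : 0 ≤ b)
include hb

theorem gw_le_gw_glue_false (hab : a + V * b ≤ 0) :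
    gw G a b σ ≤ gw G a b (glue B (fun _ => false) σ) := by
  rw [gw_eq_exp, gw_eq_exp, magnetization_glue_false, Real.exp_le_exp]
  have hI := (le_abs_self _).trans (abs_interaction_sub_le B σ hdeg)
  have hk : (0 : ℝ) ≤ kC B σ := Nat.cast_nonneg _
  have hop : (0 : ℝ) ≤ op G B σ := Nat.cast_nonneg _
  simp only [gam, Int.cast_sub, Int.cast_mul, Int.cast_natCast] at hI
  linarith [mul_le_mul_of_nonneg_left hI hb, mul_nonneg hb hop,
    mul_nonpos_of_nonneg_of_nonpos hk hab]

theorem W_mul_gw_glue_false_le :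
    W a b V G B σ * gw G a b (glue B (fun _ => false) σ) ≤ gw G a b σ := by
  rw [W, gw_eq_exp, gw_eq_exp, magnetization_glue_false, ← Real.exp_add, Real.exp_le_exp]
  have hI := (neg_le_abs _).trans (abs_interaction_sub_le B σ hdeg)
  linarith [mul_le_mul_of_nonneg_left hI hb]

theorem W_mul_gw_le_of_eqOn_compl (hab : a + V * b ≤ 0) {σ' : Config d n}
    (h : ∀ z ∉ B, σ z = σ' z) : W a b V G B σ' * gw G a b σ ≤ gw G a b σ' := by
  have hglue : glue B (fun _ => false) σ = glue B (fun _ => false) σ' :=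
    funext fun z => by by_cases hz : z ∈ B <;> simp [glue, hz, h z]
  calc W a b V G B σ' * gw G a b σ
      ≤ W a b V G B σ' * gw G a b (glue B (fun _ => false) σ') := by
        rw [← hglue]
        exact mul_le_mul_of_nonneg_left (gw_le_gw_glue_false B σ hdeg hb hab) (Real.exp_pos _).le
    _ ≤ gw G a b σ' := W_mul_gw_glue_false_le B σ' hdeg hb

end Energy

section Probability

variable {d n : ℕ}

theorem measOn_cyl_of_subset {S S' : Set (Vtx d n)} (h : S ⊆ S') (τ : Config d n) :
    MeasOn (cyl S τ) S' := fun _ _ hσ =>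
  forall₂_congr fun z hz => by rw [hσ z (h hz)]

variable [NeZero n] {G : SimpleGraph (Vtx d n)} {a b : ℝ}

theorem sum_gw_pos : 0 < ∑ σ, gw G a b σ :=
  sum_pos (fun _ _ => Real.exp_pos _) univ_nonempty

theorem P_pos {A : Set (Config d n)} (hA : A.Nonempty) : 0 < P G a b A := by
  obtain ⟨σ, hσ⟩ := hA
  refine div_pos (sum_pos' (fun τ _ => ?_) ⟨σ, mem_univ σ, ?_⟩)
    sum_gw_pos
  · split_ifs
    exacts [(Real.exp_pos _).le, le_rfl]
  · rw [if_pos hσ]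
    exact Real.exp_pos _

theorem P_univ : P G a b Set.univ = 1 := by
  simp only [P, Set.mem_univ, if_true]
  exact div_self sum_gw_pos.ne'

theorem Pc_univ (A : Set (Config d n)) : Pc G a b A Set.univ = P G a b A := by
  rw [Pc, Set.inter_univ, P_univ, div_one]

end Probability

section Resampling

variable {d n : ℕ}

theorem W_congr (a b : ℝ) (V : ℕ) (G : SimpleGraph (Vtx d n)) {B : Finset (Vtx d n)}
    {σ σ' : Config d n} (h : ∀ z ∈ B, σ z = σ' z) : W a b V G B σ = W a b V G B σ' := by
  have hk : kC B σ = kC B σ' := by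
    rw [kC, kC, filter_congr fun z hz => by rw [h z hz]]
  have hop : op G B σ = op G B σ' := by
    rw [op, op, filter_congr fun p hp => by
      rw [h p.1 (mem_product.1 hp).1, h p.2 (mem_product.1 hp).2]]
  simp only [W, gam, hk, hop]

variable [NeZero n]

theorem card_eqOn_compl (B : Finset (Vtx d n)) (σ' : Config d n) :
    #(univ.filter fun σ : Config d n => ∀ z ∉ B, σ z = σ' z) = 2 ^ #B := by
  rw [← Fintype.card_subtype]
  let e : {σ : Config d n // ∀ z ∉ B, σ z = σ' z} ≃ (B → Bool) :=
    { toFun σ z := σ.1 z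
      invFun g := ⟨fun z => if h : z ∈ B then g ⟨z, h⟩ else σ' z, fun z hz => dif_neg hz⟩
      left_inv σ := Subtype.ext <| funext fun z => by
        by_cases h : z ∈ B <;> simp [h, σ.2 z]
      right_inv g := funext fun z => by simp [z.2] }
  simp [Fintype.card_congr e]

theorem filter_glue_eq_eqOn_compl {B : Finset (Vtx d n)} {A : Set (Config d n)}
    (hA : MeasOn A (↑B)ᶜ) {ζ σ' : Config d n} (hσ' : σ' ∈ cyl ↑B ζ ∩ A) :
    (univ.filter (· ∈ A)).filter (glue B ζ · = σ') =
      univ.filter fun σ => ∀ z ∉ B, σ z = σ' z := by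
  ext σ
  simp only [mem_filter, mem_univ, true_and]
  constructor
  · rintro ⟨-, rfl⟩ z hz
    exact (if_neg hz).symm
  · intro h
    refine ⟨(hA _ _ fun z hz => (h z hz).symm).1 hσ'.2, funext fun z => ?_⟩
    by_cases hz : z ∈ B
    · exact (if_pos hz).trans (hσ'.1 z hz).symm
    · exact (if_neg hz).trans (h z hz)

variable {G : SimpleGraph (Vtx d n)} {V : ℕ} {a b : ℝ}

theorem W_mul_P_le (hdeg : ∀ u, G.degree u ≤ V) (hb : 0 ≤ b) (hab : a + V * b ≤ 0)
    (B : Finset (Vtx d n)) {A : Set (Config d n)} (hA : MeasOn A (↑B)ᶜ) (ζ : Config d n) :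
    W a b V G B ζ * P G a b A ≤ 2 ^ #B * P G a b (cyl ↑B ζ ∩ A) := by
  simp only [P, ← sum_filter]
  rw [← mul_div_assoc, ← mul_div_assoc, div_le_div_iff_of_pos_right sum_gw_pos]
  have hmaps : ∀ σ ∈ univ.filter (· ∈ A), glue B ζ σ ∈ univ.filter (· ∈ cyl ↑B ζ ∩ A) := by
    intro σ hσ
    simp only [mem_filter, mem_univ, true_and] at hσ ⊢
    refine ⟨fun z hz => if_pos hz, (hA _ _ fun z hz => ?_).1 hσ⟩
    exact (if_neg hz).symm
  calc W a b V G B ζ * ∑ σ ∈ univ.filter (· ∈ A), gw G a b σ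
      = ∑ σ ∈ univ.filter (· ∈ A), W a b V G B (glue B ζ σ) * gw G a b σ := by
        rw [mul_sum]
        exact sum_congr rfl fun σ _ => by
          rw [W_congr a b V G (σ := ζ) (σ' := glue B ζ σ) fun z hz => (if_pos hz).symm]
    _ ≤ ∑ σ ∈ univ.filter (· ∈ A), gw G a b (glue B ζ σ) :=
        sum_le_sum fun σ _ =>
          W_mul_gw_le_of_eqOn_compl B σ hdeg hb hab fun z hz => (if_neg hz).symm
    _ = ∑ σ' ∈ univ.filter (· ∈ cyl ↑B ζ ∩ A), 2 ^ #B * gw G a b σ' := by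
        rw [← sum_fiberwise_of_maps_to hmaps]
        refine sum_congr rfl fun σ' hσ' => ?_
        rw [sum_congr rfl fun σ hσ => by rw [(mem_filter.1 hσ).2], sum_const,
          filter_glue_eq_eqOn_compl hA (mem_filter.1 hσ').2, card_eqOn_compl, nsmul_eq_mul,
          Nat.cast_pow, Nat.cast_ofNat]
    _ = _ := by
        rw [← mul_sum, sum_filter]
        -- the two sides differ only in their `Decidable` instances
        congr!

end Resampling

theorem inv_two_pow_mul_WL_le_Pc {d n : ℕ} [NeZero n] {G : SimpleGraph (Vtx d n)}
    (hG : ∀ z u v : Vtx d n, G.Adj (z + u) (z + v) ↔ G.Adj u v) {a b : ℝ} (hb : 0 ≤ b)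
    (hab : a + nV G * b ≤ 0) (r : ℕ) (x : Vtx d n) (η : LC G r) {A : Set (Config d n)}
    (hA : MeasOn A (↑(ball G x r))ᶜ) (hne : A.Nonempty) :
    (2 ^ #(ball G 0 r) : ℝ)⁻¹ * WL a b (nV G) G r η ≤ Pc G a b (occ G r x η) A := by
  rw [Pc, occ_eq_cyl hG, le_div_iff₀ (P_pos hne), ← card_ball hG x, ← W_ball_transl hG,
    mul_assoc, inv_mul_le_iff₀ (by positivity)]
  exact W_mul_P_le (fun u => (degree_eq_nV hG u).le) hb hab _ hA _

theorem statement3_general (d n r ρ : ℕ) [NeZero n] (q : ℝ≥0∞)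
    (a b : ℝ) (hb : 0 ≤ b)
    (G : SimpleGraph (Vtx d n)) (hG : G = torus d n q ρ)
    (hab : a + (nV G : ℝ) * b ≤ 0)
    (x : Vtx d n) (η : LC G r) :
    (∀ τ : Config d n,
      ((2 : ℝ) ^ (ball G (0 : Vtx d n) r).card)⁻¹ * WL a b (nV G) G r η ≤
        Pc G a b (occ G r x η) (cyl (↑(nbhdF G (ball G x r))) τ)) ∧
    ((2 : ℝ) ^ (ball G (0 : Vtx d n) r).card)⁻¹ * WL a b (nV G) G r η ≤
      P G a b (occ G r x η) := by
  have hinv : ∀ z u v : Vtx d n, G.Adj (z + u) (z + v) ↔ G.Adj u v :=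
    hG ▸ torus_adj_add_left q ρ
  refine ⟨fun τ => inv_two_pow_mul_WL_le_Pc hinv hb hab r x η ?_ ⟨τ, fun _ _ => rfl⟩, ?_⟩
  · exact measOn_cyl_of_subset (fun y hy => (mem_filter.1 hy).2.1) τ
  · rw [← Pc_univ]
    exact inv_two_pow_mul_WL_le_Pc hinv hb hab r x η (fun _ _ _ => Iff.rfl) Set.univ_nonempty

/-- Lemma 3.2, lower bound: if `a + 𝒱b ≤ 0` then, uniformly over the
boundary configuration `τ`, `μ_{a,b}(I_x^η = 1 | τ) ≥ 2^{-β_r} W_n(η)`, and in particular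
`μ_{a,b}(I_x^η = 1) ≥ 2^{-β_r} W_n(η)`. -/
theorem statement3 (d n r ρ : ℕ) [NeZero n] (q : ℝ≥0∞)
    (hd : 0 < d) (hr : 0 < r) (hρ : 0 < ρ) (hq : 1 ≤ q) (hn : 2 * ρ * r < n)
    (a b : ℝ) (ha : a < 0) (hb : 0 ≤ b)
    (G : SimpleGraph (Vtx d n)) (hG : G = torus d n q ρ)
    (hab : a + (nV G : ℝ) * b ≤ 0)
    (x : Vtx d n) (η : LC G r) :
    (∀ τ : Config d n,
      ((2 : ℝ) ^ (ball G (0 : Vtx d n) r).card)⁻¹ * WL a b (nV G) G r η ≤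
        Pc G a b (occ G r x η) (cyl (↑(nbhdF G (ball G x r))) τ)) ∧
    ((2 : ℝ) ^ (ball G (0 : Vtx d n) r).card)⁻¹ * WL a b (nV G) G r η ≤
      P G a b (occ G r x η) :=
  statement3_general d n r ρ q a b hb G hG hab x η

end Geo
end

section
/- Let η be a local configuration with radius r, x ∈ V_n a vertex, and R ≥ r a fixed integer. Let 𝒜_r(x,R,+) denote the event that there exists at least one positive vertex in the ring ℛ(x,r,R) = {y ∈ V_n : r < dist(x,y) ≤ R}. If the potentials satisfy a(n) + 2𝒱b(n) ≤ 0 and a(n) → −∞ as n → ∞, then the conditional probability μ_{a,b}(𝒜_r(x,R,+) | I_x^η = 1) tends to 0 as n → ∞. -/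
open scoped BigOperators ENNReal NNReal
open Filter

attribute [local instance] Classical.propDecidable

namespace Geo

/-- The torus of size `n+1` (in statements about `n → ∞` the size of the lattice is
written `n+1` so that it is always positive). -/
noncomputable abbrev Gt (d : ℕ) (q : ℝ≥0∞) (ρ n : ℕ) : SimpleGraph (Vtx d (n + 1)) :=
  torus d (n + 1) q ρ

/-- `𝒱` for the torus of size `n+1`. -/
noncomputable abbrev Vdeg (d : ℕ) (q : ℝ≥0∞) (ρ n : ℕ) : ℕ := nV (Gt d q ρ n)

/-- `β_r` for the torus of size `n+1`. -/
noncomputable abbrev βr (d : ℕ) (q : ℝ≥0∞) (ρ n r : ℕ) : ℕ :=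
  (ball (Gt d q ρ n) (0 : Vtx d (n + 1)) r).card

/-- The weight of a local configuration on the torus of size `n+1`. -/
noncomputable abbrev WLn (d : ℕ) (q : ℝ≥0∞) (ρ n r : ℕ) (a b : ℝ)
    (η : LC (Gt d q ρ n) r) : ℝ :=
  WL a b (Vdeg d q ρ n) (Gt d q ρ n) r η

end Geo

/-! Setting a positive spin at `y` to `-1` divides the Gibbs weight by
`exp (2a + 2b ∑_{z ∼ y} σ(z)) ≤ exp (2a + 2b𝒱) ≤ exp a`, and on configurations with `σ(y) = +1`
this flip is injective. A vertex of the ring lies outside `B(x,r)`, so the flip preserves the event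
`I_x^η = 1`; hence each ring vertex is positive with conditional probability at most `exp a`.
A union bound over the ring, which has at most `(2ρR+1)^d` vertices whatever `n` is, gives
`μ(𝒜_r(x,R,+) | I_x^η = 1) ≤ (2ρR+1)^d exp (a n) → 0`. -/

namespace SimpleGraph

lemma dist_map_le {V W : Type*} {G : SimpleGraph V} {G' : SimpleGraph W} (f : G →g G')
    {u v : V} (h : G.Reachable u v) : G'.dist (f u) (f v) ≤ G.dist u v := by
  obtain ⟨p, hp⟩ := h.exists_walk_length_eq_dist
  exact hp ▸ (G'.dist_le (p.map f)).trans_eq (p.length_map f)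

end SimpleGraph

namespace Geo

section Energy

variable {V : Type*} [Fintype V] [DecidableEq V] (G : SimpleGraph V)

lemma sum_update_eq_add_sub (s : V → ℝ) (y : V) (t : ℝ) :
    ∑ z, Function.update s y t z = ∑ z, s z + (t - s y) := by
  rw [Finset.sum_update_of_mem (Finset.mem_univ y),
    Finset.sum_eq_add_sum_sdiff_singleton_of_mem (Finset.mem_univ y) s]
  ring

lemma sum_adj_mul_update (s : V → ℝ) (y : V) (t : ℝ) :
    ∑ x, ∑ z, (if G.Adj x z then Function.update s y t x * Function.update s y t z else 0) =
      ∑ x, ∑ z, (if G.Adj x z then s x * s z else 0) +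
        2 * (t - s y) * ∑ z, (if G.Adj y z then s z else 0) := by
  have key : ∀ x z, (if G.Adj x z then Function.update s y t x * Function.update s y t z else 0) =
      (if G.Adj x z then s x * s z else 0) +
        ((if x = y then (t - s y) * (if G.Adj y z then s z else 0) else 0) +
          (if z = y then (t - s y) * (if G.Adj y x then s x else 0) else 0)) := by
    intro x z
    have hzx := G.adj_comm z x
    by_cases h : G.Adj x z <;> by_cases hx : x = y <;> by_cases hz : z = y <;> subst_vars <;>
      simp_all <;> ring
  simp only [key, Finset.sum_add_distrib]
  rw [Finset.sum_comm (f := fun x z => if z = y then _ else (0:ℝ))]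
  simp only [Finset.sum_ite_irrel, Finset.sum_const_zero, Finset.sum_ite_eq', Finset.mem_univ,
    if_true, ← Finset.mul_sum]
  ring

end Energy

section Gibbs

variable {d m : ℕ} [NeZero m] (G : SimpleGraph (Vtx d m)) (a b : ℝ)

lemma gw_pos (σ : Config d m) : 0 < gw G a b σ := Real.exp_pos _

lemma gw_eq_exp_mul_gw_update (σ : Config d m) {y : Vtx d m} (hy : σ y = true) :
    gw G a b σ = Real.exp (2 * a + 2 * b * ∑ z, (if G.Adj y z then spin (σ z) else 0)) *
      gw G a b (Function.update σ y false) := by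
  have hspin : ∀ z, spin (Function.update σ y false z) =
      Function.update (fun z => spin (σ z)) y (-1) z := fun z => by
    rw [Function.apply_update (fun _ => spin)]; rfl
  simp only [gw, hspin, sum_update_eq_add_sub, sum_adj_mul_update, hy, ← Real.exp_add]
  congr 1
  simp only [spin, if_true]
  ring

lemma sum_adj_spin_le (σ : Config d m) (y : Vtx d m) :
    ∑ z, (if G.Adj y z then spin (σ z) else 0) ≤ ((Finset.univ.filter (G.Adj y)).card : ℝ) := by
  rw [Finset.card_filter, Nat.cast_sum]
  refine Finset.sum_le_sum fun z _ => ?_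
  split_ifs
  · cases σ z <;> norm_num [spin]
  · simp

lemma gw_le_exp_mul_gw_update (hb : 0 ≤ b) (σ : Config d m) {y : Vtx d m} (hy : σ y = true) :
    gw G a b σ ≤ Real.exp (2 * a + 2 * b * (Finset.univ.filter (G.Adj y)).card) *
      gw G a b (Function.update σ y false) := by
  rw [gw_eq_exp_mul_gw_update G a b σ hy]
  gcongr
  · exact (gw_pos G a b _).le
  · exact sum_adj_spin_le G σ y

lemma P_nonneg (A : Set (Config d m)) : 0 ≤ P G a b A :=
  div_nonneg (Finset.sum_nonneg fun σ _ => by split_ifs <;> simp [(gw_pos G a b σ).le])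
    (Finset.sum_nonneg fun σ _ => (gw_pos G a b σ).le)

lemma Pc_nonneg (A B : Set (Config d m)) : 0 ≤ Pc G a b A B :=
  div_nonneg (P_nonneg G a b _) (P_nonneg G a b _)

lemma Pc_le_of_P_inter_le {A B : Set (Config d m)} {c : ℝ} (hc : 0 ≤ c)
    (h : P G a b (A ∩ B) ≤ c * P G a b B) : Pc G a b A B ≤ c :=
  div_le_of_le_mul₀ (P_nonneg G a b B) hc h

lemma P_biUnion_le {ι : Type*} (s : Finset ι) (E : ι → Set (Config d m)) :
    P G a b {σ | ∃ i ∈ s, σ ∈ E i} ≤ ∑ i ∈ s, P G a b (E i) := by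
  unfold P
  rw [← Finset.sum_div, Finset.sum_comm]
  refine div_le_div_of_nonneg_right (Finset.sum_le_sum fun σ _ => ?_)
    (Finset.sum_nonneg fun σ _ => (gw_pos G a b σ).le)
  have hnonneg : ∀ i ∈ s, 0 ≤ if σ ∈ E i then gw G a b σ else 0 := fun i _ => by
    split_ifs <;> simp [(gw_pos G a b σ).le]
  split_ifs with h
  · obtain ⟨i, hi, hσ⟩ := h
    exact (if_pos hσ).symm.trans_le (Finset.single_le_sum hnonneg hi)
  · exact Finset.sum_nonneg hnonneg

lemma P_inter_le_exp_mul (hb : 0 ≤ b) (B : Set (Config d m)) (y : Vtx d m)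
    (hB : ∀ σ ∈ B, Function.update σ y false ∈ B) :
    P G a b ({σ | σ y = true} ∩ B) ≤
      Real.exp (2 * a + 2 * b * (Finset.univ.filter (G.Adj y)).card) * P G a b B := by
  set c := Real.exp (2 * a + 2 * b * (Finset.univ.filter (G.Adj y)).card)
  set T := Finset.univ.filter (· ∈ {σ : Config d m | σ y = true} ∩ B)
  have hrestore : ∀ σ ∈ T, Function.update (Function.update σ y false) y true = σ := by
    intro σ hσ
    rw [Function.update_idem, ← (Finset.mem_filter.1 hσ).2.1, Function.update_eq_self]
  have hinj : Set.InjOn (Function.update · y false) (T : Set (Config d m)) := by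
    intro σ hσ τ hτ h
    rw [← hrestore σ (Finset.mem_coe.1 hσ), ← hrestore τ (Finset.mem_coe.1 hτ)]
    exact congrArg (Function.update · y true) h
  unfold P
  rw [mul_div_assoc']
  refine div_le_div_of_nonneg_right ?_ (Finset.sum_nonneg fun σ _ => (gw_pos G a b σ).le)
  calc _ = ∑ σ ∈ T, gw G a b σ := by rw [Finset.sum_filter]; congr!
    _ ≤ ∑ σ ∈ T, c * gw G a b (Function.update σ y false) :=
        Finset.sum_le_sum fun σ hσ =>
          gw_le_exp_mul_gw_update G a b hb σ (Finset.mem_filter.1 hσ).2.1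
    _ = c * ∑ τ ∈ T.image (Function.update · y false), gw G a b τ := by
        rw [Finset.mul_sum, Finset.sum_image hinj]
    _ ≤ c * ∑ τ, (if τ ∈ B then gw G a b τ else 0) := by
        rw [← Finset.sum_filter]
        gcongr
        · exact fun τ _ _ => (gw_pos G a b τ).le
        · intro τ hτ
          obtain ⟨σ, hσ, rfl⟩ := Finset.mem_image.1 hτ
          exact Finset.mem_filter.2 ⟨Finset.mem_univ _, hB σ (Finset.mem_filter.1 hσ).2.2⟩

lemma Pc_exists_true_le (hb : 0 ≤ b) (S : Finset (Vtx d m)) (B : Set (Config d m)) (D : ℕ)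
    (hdeg : ∀ y ∈ S, (Finset.univ.filter (G.Adj y)).card ≤ D)
    (hB : ∀ y ∈ S, ∀ σ ∈ B, Function.update σ y false ∈ B) :
    Pc G a b {σ | ∃ y ∈ S, σ y = true} B ≤ S.card * Real.exp (2 * a + 2 * b * D) := by
  refine Pc_le_of_P_inter_le G a b (by positivity) ?_
  have hinter : {σ | ∃ y ∈ S, σ y = true} ∩ B = {σ | ∃ y ∈ S, σ ∈ {σ | σ y = true} ∩ B} := by
    ext σ
    exact ⟨fun ⟨⟨y, hy, h⟩, hσ⟩ => ⟨y, hy, h, hσ⟩, fun ⟨y, hy, h, hσ⟩ => ⟨⟨y, hy, h⟩, hσ⟩⟩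
  calc P G a b ({σ | ∃ y ∈ S, σ y = true} ∩ B)
      ≤ ∑ y ∈ S, P G a b ({σ | σ y = true} ∩ B) := hinter ▸ P_biUnion_le G a b S _
    _ ≤ ∑ _y ∈ S, Real.exp (2 * a + 2 * b * D) * P G a b B := by
        refine Finset.sum_le_sum fun y hy => (P_inter_le_exp_mul G a b hb B y (hB y hy)).trans ?_
        gcongr
        · exact P_nonneg G a b B
        · exact_mod_cast hdeg y hy
    _ = S.card * Real.exp (2 * a + 2 * b * D) * P G a b B := by
        rw [Finset.sum_const, nsmul_eq_mul]; ring

end Gibbs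

section Torus

variable {d m : ℕ} {q : ℝ≥0∞} {ρ : ℕ}

lemma cd_add_left (t u v : Vtx d m) (i : Fin d) : cd ((t + u) i) ((t + v) i) = cd (u i) (v i) := by
  simp [cd, add_sub_add_left_eq_sub]

lemma cd_eq_natAbs_valMinAbs [NeZero m] (u v : ZMod m) : cd u v = (u - v).valMinAbs.natAbs := by
  rw [ZMod.valMinAbs_natAbs_eq_min, cd]
  rcases eq_or_ne (u - v) 0 with h | h
  · rw [h, ← neg_sub, h]; simp
  · have : NeZero (u - v) := ⟨h⟩
    rw [← neg_sub u v, ZMod.val_neg_of_ne_zero]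

lemma cd_triangle [NeZero m] (u v w : ZMod m) : cd u w ≤ cd u v + cd v w := by
  simpa only [cd_eq_natAbs_valMinAbs, sub_add_sub_cancel] using
    (ZMod.natAbs_valMinAbs_add_le (u - v) (v - w)).trans (Int.natAbs_add_le _ _)

lemma card_cd_le [NeZero m] (v : ZMod m) (c : ℕ) :
    (Finset.univ.filter fun u => cd v u ≤ c).card ≤ 2 * c + 1 := by
  have hsub : (Finset.univ.filter fun u => cd v u ≤ c) ⊆
      (Finset.Icc (-c : ℤ) c).image fun k : ℤ => v - (k : ZMod m) := by
    intro u hu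
    rw [Finset.mem_filter, cd_eq_natAbs_valMinAbs] at hu
    refine Finset.mem_image.2 ⟨(v - u).valMinAbs, Finset.mem_Icc.2 ⟨by omega, by omega⟩, ?_⟩
    rw [ZMod.coe_valMinAbs, sub_sub_cancel]
  calc _ ≤ _ := Finset.card_le_card hsub
    _ ≤ (Finset.Icc (-c : ℤ) c).card := Finset.card_image_le
    _ = 2 * c + 1 := by rw [Int.card_Icc]; omega

def torusAddLeft (t : Vtx d m) : torus d m q ρ →g torus d m q ρ where
  toFun v := t + v
  map_rel' {u v} h := ⟨fun e => h.1 (add_left_cancel e), by simpa only [cd_add_left] using h.2⟩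

@[simp]
lemma torusAddLeft_apply (t v : Vtx d m) : torusAddLeft (q := q) (ρ := ρ) t v = t + v := rfl

lemma torus_dist_add_left_le (t u v : Vtx d m) :
    (torus d m q ρ).dist (t + u) (t + v) ≤ (torus d m q ρ).dist u v := by
  by_cases h : (torus d m q ρ).Reachable u v
  · exact SimpleGraph.dist_map_le (torusAddLeft t) h
  · refine (SimpleGraph.dist_eq_zero_of_not_reachable fun h' => h ?_).trans_le (Nat.zero_le _)
    simpa using h'.map (torusAddLeft (-t))

lemma torus_card_adj [NeZero m] (y : Vtx d m) :
    (Finset.univ.filter ((torus d m q ρ).Adj y)).card = nV (torus d m q ρ) := by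
  refine Finset.card_bij' (fun z _ => -y + z) (fun z _ => y + z) ?_ ?_ (by simp) (by simp)
  · intro z hz
    simpa using (torusAddLeft (-y)).map_rel (Finset.mem_filter.1 hz).2
  · intro z hz
    simpa using (torusAddLeft y).map_rel (Finset.mem_filter.1 hz).2

lemma cd_le_of_adj (hq : 1 ≤ q) {u v : Vtx d m} (h : (torus d m q ρ).Adj u v) (i : Fin d) :
    cd (u i) (v i) ≤ ρ := by
  obtain ⟨-, h⟩ := h
  split_ifs at h with hT
  · exact h i
  have hpos : 0 < q.toReal := ENNReal.toReal_pos (by rintro rfl; simp at hq) hT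
  have hi : (cd (u i) (v i) : ℝ) ^ q.toReal ≤ (ρ : ℝ) ^ q.toReal :=
    (Finset.single_le_sum (f := fun j => (cd (u j) (v j) : ℝ) ^ q.toReal)
      (fun j _ => by positivity) (Finset.mem_univ i)).trans h
  exact_mod_cast (Real.rpow_le_rpow_iff (by positivity) (by positivity) hpos).1 hi

lemma cd_le_mul_length [NeZero m] (hq : 1 ≤ q) {u v : Vtx d m} (p : (torus d m q ρ).Walk u v)
    (i : Fin d) : cd (u i) (v i) ≤ ρ * p.length := by
  induction p with
  | nil => simp [cd]
  | @cons u w v h p ih =>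
    calc cd (u i) (v i) ≤ cd (u i) (w i) + cd (w i) (v i) := cd_triangle _ _ _
      _ ≤ ρ + ρ * p.length := add_le_add (cd_le_of_adj hq h i) ih
      _ = ρ * (p.length + 1) := by ring

lemma cd_le_mul_dist [NeZero m] (hq : 1 ≤ q) {u v : Vtx d m} (h : (torus d m q ρ).Reachable u v)
    (i : Fin d) : cd (u i) (v i) ≤ ρ * (torus d m q ρ).dist u v := by
  obtain ⟨p, hp⟩ := h.exists_walk_length_eq_dist
  exact hp ▸ cd_le_mul_length hq p i

lemma card_ringF_le [NeZero m] (hq : 1 ≤ q) (x : Vtx d m) (r R : ℕ) :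
    (ringF (torus d m q ρ) x r R).card ≤ (2 * (ρ * R) + 1) ^ d := by
  have hsub : ringF (torus d m q ρ) x r R ⊆
      Fintype.piFinset fun i => Finset.univ.filter fun u => cd (x i) u ≤ ρ * R := by
    intro y hy
    obtain ⟨-, hr, hR⟩ := Finset.mem_filter.1 hy
    have hreach : (torus d m q ρ).Reachable x y :=
      SimpleGraph.Reachable.of_dist_ne_zero (by omega)
    exact Fintype.mem_piFinset.2 fun i => Finset.mem_filter.2
      ⟨Finset.mem_univ _, (cd_le_mul_dist hq hreach i).trans (Nat.mul_le_mul_left ρ hR)⟩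
  calc _ ≤ _ := Finset.card_le_card hsub
    _ ≤ (2 * (ρ * R) + 1) ^ (Finset.univ : Finset (Fin d)).card := by
        rw [Fintype.card_piFinset]
        exact Finset.prod_le_pow_card _ _ _ fun i _ => card_cd_le _ _
    _ = (2 * (ρ * R) + 1) ^ d := by rw [Finset.card_univ, Fintype.card_fin]

lemma update_mem_occ_of_mem_ringF [NeZero m] {r R : ℕ} {x y : Vtx d m}
    {η : LC (torus d m q ρ) r} {σ : Config d m} (hy : y ∈ ringF (torus d m q ρ) x r R)
    (hσ : σ ∈ occ (torus d m q ρ) r x η) :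
    Function.update σ y false ∈ occ (torus d m q ρ) r x η := by
  intro w hw
  have hne : x + w ≠ y := by
    rintro rfl
    have hfar := (Finset.mem_filter.1 hy).2.1
    have hnear : (torus d m q ρ).dist x (x + w) ≤ r := by
      simpa using (torus_dist_add_left_le x 0 w).trans (Finset.mem_filter.1 hw).2
    omega
  rw [Function.update_of_ne hne]
  exact hσ w hw

lemma Pc_exists_true_ringF_le [NeZero m] (hq : 1 ≤ q) {a b : ℝ} (hb : 0 ≤ b) (x : Vtx d m)
    (r R : ℕ) (η : LC (torus d m q ρ) r) :
    Pc (torus d m q ρ) a b {σ | ∃ y ∈ ringF (torus d m q ρ) x r R, σ y = true}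
        (occ (torus d m q ρ) r x η) ≤
      ((2 * (ρ * R) + 1) ^ d : ℕ) * Real.exp (2 * a + 2 * b * nV (torus d m q ρ)) := by
  refine (Pc_exists_true_le _ a b hb _ _ _ (fun y _ => (torus_card_adj y).le)
    fun y hy σ hσ => update_mem_occ_of_mem_ringF hy hσ).trans ?_
  gcongr
  exact card_ringF_le hq x r R

end Torus

theorem statement10_general (d r ρ R : ℕ) (q : ℝ≥0∞) (hq : 1 ≤ q)
    (a b : ℕ → ℝ) (hb : ∀ n, 0 ≤ b n)
    (hab : ∀ n, a n + 2 * (Vdeg d q ρ n : ℝ) * b n ≤ 0)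
    (hainf : Filter.Tendsto a Filter.atTop Filter.atBot)
    (x : ∀ n, Vtx d (n + 1)) (η : ∀ n, LC (Gt d q ρ n) r) :
    Filter.Tendsto
      (fun n => Pc (Gt d q ρ n) (a n) (b n)
        {σ | ∃ y ∈ ringF (Gt d q ρ n) (x n) r R, σ y = true}
        (occ (Gt d q ρ n) r (x n) (η n)))
      Filter.atTop (nhds 0) := by
  set C : ℝ := (((2 * (ρ * R) + 1) ^ d : ℕ) : ℝ)
  have hbound : ∀ n, Pc (Gt d q ρ n) (a n) (b n)
      {σ | ∃ y ∈ ringF (Gt d q ρ n) (x n) r R, σ y = true} (occ (Gt d q ρ n) r (x n) (η n)) ≤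
        C * Real.exp (a n) := fun n =>
    (Pc_exists_true_ringF_le hq (hb n) (x n) r R (η n)).trans
      (by gcongr; linarith [hab n])
  have hlim : Tendsto (fun n => C * Real.exp (a n)) atTop (nhds 0) := by
    simpa using (Real.tendsto_exp_atBot.comp hainf).const_mul C
  exact squeeze_zero (fun n => Pc_nonneg _ _ _ _ _) hbound hlim

/-- Lemma 5.2: if `a(n) + 2𝒱b(n) ≤ 0` and `a(n) → -∞`, then, for a
fixed radius `R ≥ r`, `μ_{a,b}(𝒜_r(x,R,+) | I_x^η = 1) → 0`, where `𝒜_r(x,R,+)` is the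
event that some positive vertex lies in the ring `ℛ(x,r,R)`. -/
theorem statement10 (d r ρ R : ℕ) (q : ℝ≥0∞)
    (hd : 0 < d) (hr : 0 < r) (hρ : 0 < ρ) (hq : 1 ≤ q) (hrR : r ≤ R)
    (a b : ℕ → ℝ) (ha : ∀ n, a n < 0) (hb : ∀ n, 0 ≤ b n)
    (hab : ∀ n, a n + 2 * (Vdeg d q ρ n : ℝ) * b n ≤ 0)
    (hainf : Filter.Tendsto a Filter.atTop Filter.atBot)
    (x : ∀ n, Vtx d (n + 1)) (η : ∀ n, LC (Gt d q ρ n) r)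
    (hη : ∃ k0 g0, ∀ᶠ n in Filter.atTop,
      kL (Gt d q ρ n) r (η n) = k0 ∧ gamL (Vdeg d q ρ n) (Gt d q ρ n) r (η n) = g0) :
    Filter.Tendsto
      (fun n => Pc (Gt d q ρ n) (a n) (b n)
        {σ | ∃ y ∈ ringF (Gt d q ρ n) (x n) r R, σ y = true}
        (occ (Gt d q ρ n) r (x n) (η n)))
      Filter.atTop (nhds 0) :=
  statement10_general d r ρ R q hq a b hb hab hainf x η

end Geo
end
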